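/- With the notation and hypotheses of the integration-by-parts identity for I[γ,φ], one has the uniform bound |I[γ,φ](y,t)| ≤ (|φ(0)| + |φ(t)|)/2 + (1/2)∫_0^t |φ'(τ)| dτ + √(t/π) · max_{τ∈[0,t]} |γ'(τ) φ(τ)|, valid for all y > max_{τ∈[0,t]} γ(τ). -/

import Mathlib

open Real MeasureTheory intervalIntegral

/-- The 1D double-layer heat kernel. -/
noncomputable def dlKernel (x τ : ℝ) : ℝ :=
  x / (4 * Real.sqrt Real.pi * τ ^ ((3:ℝ)/2)) * Real.exp (-x ^ 2 / (4 * τ))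

/-! Write `H` for `dlKernel`, `K x s = exp (-x²/4s) / √(4πs)` for the heat kernel and
`G x s = erf (x / (2√s)) / 2`. Then `∂ₓG = K` and `∂ₛG = -H`, so along `τ ↦ (y - γ τ, t - τ)` the
function `F = G (y - γ) (t - ·)` has `F' = H - γ' K`, and integrating `(F φ)'` over `[0, b]`,
`b < t`, gives `∫₀ᵇ H φ = [F φ]₀ᵇ + ∫₀ᵇ K γ' φ - ∫₀ᵇ F φ'`. Now `|F| ≤ 1/2` because `|erf| ≤ 1`,
and `K x s ≤ 1/√(4πs)` integrates to at most `√(t/π)`. Finally `y - γ` is bounded below by a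
positive constant, so `H (y - γ τ) (t - τ)` stays bounded as `τ → t`: the integral over `[0, t]`
exists and the bound passes to the limit `b → t`. -/

open Set

noncomputable def erf (u : ℝ) : ℝ := 2 / √π * ∫ v in (0 : ℝ)..u, exp (-v ^ 2)

theorem hasDerivAt_erf (u : ℝ) : HasDerivAt erf (2 / √π * exp (-u ^ 2)) u :=
  ((continuous_neg.comp (continuous_pow 2)).rexp.integral_hasStrictDerivAt 0 u).hasDerivAt
    |>.const_mul _

theorem continuous_erf : Continuous erf :=
  continuous_iff_continuousAt.mpr fun u => (hasDerivAt_erf u).continuousAt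

theorem erf_neg (u : ℝ) : erf (-u) = -erf u := by
  have h := integral_comp_neg (a := 0) (b := u) (fun v : ℝ => exp (-v ^ 2))
  simp only [neg_sq, neg_zero] at h
  rw [erf, erf, h, integral_symm, mul_neg]

theorem erf_nonneg {u : ℝ} (hu : 0 ≤ u) : 0 ≤ erf u :=
  mul_nonneg (by positivity) (integral_nonneg hu fun v _ => (exp_pos _).le)

theorem erf_le_one {u : ℝ} (hu : 0 ≤ u) : erf u ≤ 1 := by
  have hint : IntegrableOn (fun v : ℝ => exp (-v ^ 2)) (Ioi 0) := by
    simpa using (integrable_exp_neg_mul_sq one_pos).integrableOn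
  have hIoi : ∫ v in Ioi (0 : ℝ), exp (-v ^ 2) = √π / 2 := by
    simpa using integral_gaussian_Ioi 1
  have hle : ∫ v in (0 : ℝ)..u, exp (-v ^ 2) ≤ √π / 2 := by
    rw [integral_of_le hu, ← hIoi]
    exact setIntegral_mono_set hint (.of_forall fun v => (exp_pos _).le)
      Ioc_subset_Ioi_self.eventuallyLE
  have hπ : 0 < √π := sqrt_pos.mpr pi_pos
  calc erf u ≤ 2 / √π * (√π / 2) := by rw [erf]; gcongr
    _ = 1 := by field_simp

theorem abs_erf_le_one (u : ℝ) : |erf u| ≤ 1 := by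
  rcases le_total 0 u with hu | hu
  · rw [abs_of_nonneg (erf_nonneg hu)]; exact erf_le_one hu
  · rw [← abs_neg, ← erf_neg, abs_of_nonneg (erf_nonneg (neg_nonneg.mpr hu))]
    exact erf_le_one (neg_nonneg.mpr hu)

noncomputable def heatKernel (x s : ℝ) : ℝ := exp (-x ^ 2 / (4 * s)) / √(4 * π * s)

noncomputable def heatKernelPrimitive (x s : ℝ) : ℝ := erf (x / (2 * √s)) / 2

theorem rpow_three_halves_eq {s : ℝ} (hs : 0 ≤ s) : s ^ ((3 : ℝ) / 2) = s * √s := by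
  rw [show (3 : ℝ) / 2 = 1 + 1 / 2 by norm_num, rpow_add' hs (by norm_num), rpow_one,
    ← sqrt_eq_rpow]

theorem sqrt_four_mul_pi_mul {s : ℝ} (hs : 0 ≤ s) : √(4 * π * s) = 2 * √π * √s := by
  rw [sqrt_mul' _ hs, sqrt_mul' _ pi_pos.le, show (4 : ℝ) = 2 ^ 2 by norm_num, sqrt_sq two_pos.le]

theorem HasDerivAt.heatKernelPrimitive {x s : ℝ → ℝ} {x' s' τ : ℝ} (hx : HasDerivAt x x' τ)
    (hs : HasDerivAt s s' τ) (hpos : 0 < s τ) :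
    HasDerivAt (fun σ => heatKernelPrimitive (x σ) (s σ))
      (x' * heatKernel (x τ) (s τ) - s' * dlKernel (x τ) (s τ)) τ := by
  have hq : 0 < √(s τ) := sqrt_pos.mpr hpos
  have hu : HasDerivAt (fun σ => x σ / (2 * √(s σ))) _ τ :=
    hx.div ((hs.sqrt hpos.ne').const_mul 2) (by positivity)
  refine (((hasDerivAt_erf _).comp τ hu).div_const 2).congr_deriv ?_
  have hexp : -(x τ / (2 * √(s τ))) ^ 2 = -x τ ^ 2 / (4 * s τ) := by
    rw [div_pow, mul_pow, sq_sqrt hpos.le]; ring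
  rw [hexp, heatKernel, dlKernel, rpow_three_halves_eq hpos.le, sqrt_four_mul_pi_mul hpos.le]
  have hπ : 0 < √π := sqrt_pos.mpr pi_pos
  field_simp
  rw [sq_sqrt hpos.le]
  ring

section
variable {x s : ℝ → ℝ} {S : Set ℝ}

theorem ContinuousOn.heatKernel (hx : ContinuousOn x S) (hs : ContinuousOn s S)
    (hpos : ∀ τ ∈ S, 0 < s τ) : ContinuousOn (fun τ => heatKernel (x τ) (s τ)) S := by
  unfold _root_.heatKernel
  fun_prop (disch := intro τ hτ; have := hpos τ hτ; positivity)

theorem ContinuousOn.dlKernel (hx : ContinuousOn x S) (hs : ContinuousOn s S)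
    (hpos : ∀ τ ∈ S, 0 < s τ) : ContinuousOn (fun τ => dlKernel (x τ) (s τ)) S := by
  have hpow : ContinuousOn (fun τ => s τ ^ ((3 : ℝ) / 2)) S :=
    hs.rpow_const fun _ _ => Or.inr (by norm_num)
  unfold _root_.dlKernel
  fun_prop (disch := intro τ hτ; have := hpos τ hτ; positivity)

theorem ContinuousOn.heatKernelPrimitive (hx : ContinuousOn x S) (hs : ContinuousOn s S)
    (hpos : ∀ τ ∈ S, 0 < s τ) : ContinuousOn (fun τ => heatKernelPrimitive (x τ) (s τ)) S := by
  unfold _root_.heatKernelPrimitive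
  have := continuous_erf
  fun_prop (disch := intro τ hτ; have := hpos τ hτ; positivity)
end

theorem abs_heatKernelPrimitive_le (x s : ℝ) : |heatKernelPrimitive x s| ≤ 1 / 2 := by
  rw [heatKernelPrimitive, abs_div, abs_two]
  linarith [abs_erf_le_one (x / (2 * √s))]

theorem abs_heatKernelPrimitive_mul_le (x s c : ℝ) : |heatKernelPrimitive x s * c| ≤ |c| / 2 := by
  rw [abs_mul, div_eq_mul_one_div, mul_comm |c|]
  exact mul_le_mul_of_nonneg_right (abs_heatKernelPrimitive_le x s) (abs_nonneg c)

theorem dlKernel_nonneg {x s : ℝ} (hx : 0 ≤ x) (hs : 0 ≤ s) : 0 ≤ dlKernel x s := by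
  unfold dlKernel; positivity

/-- From `exp z ≥ z ^ 2 / 2` with `z = x ^ 2 / (4 * s)`. -/
theorem dlKernel_le {x s : ℝ} (hx : 0 < x) (hs : 0 < s) :
    dlKernel x s ≤ 8 * √s / (√π * x ^ 3) := by
  set z := x ^ 2 / (4 * s) with hz
  have hz0 : 0 < z := by positivity
  have hexp : exp (-z) ≤ 2 / z ^ 2 := by
    have := pow_div_factorial_le_exp z hz0.le 2
    rw [exp_neg, inv_le_comm₀ (exp_pos z) (by positivity)]
    simpa [Nat.factorial, div_eq_mul_inv, mul_comm] using this
  have hq : 0 < √s := sqrt_pos.mpr hs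
  have hπ : 0 < √π := sqrt_pos.mpr pi_pos
  calc dlKernel x s = x / (4 * √π * (s * √s)) * exp (-z) := by
        rw [dlKernel, rpow_three_halves_eq hs.le, hz, neg_div]
    _ ≤ x / (4 * √π * (s * √s)) * (2 / z ^ 2) := by gcongr
    _ = 8 * √s / (√π * x ^ 3) := by
        rw [hz]
        field_simp
        rw [sq_sqrt hs.le]
        ring

theorem heatKernel_nonneg (x s : ℝ) : 0 ≤ heatKernel x s := by
  unfold heatKernel; positivity

theorem heatKernel_le (x : ℝ) {s : ℝ} (hs : 0 < s) : heatKernel x s ≤ (√(4 * π * s))⁻¹ := by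
  rw [heatKernel, div_eq_mul_inv]
  refine mul_le_of_le_one_left (by positivity) (exp_le_one_iff.mpr ?_)
  exact div_nonpos_of_nonpos_of_nonneg (neg_nonpos.mpr (sq_nonneg x)) (by positivity)

theorem integral_inv_sqrt_four_pi_mul_sub {t b : ℝ} (hb : 0 ≤ b) (hbt : b < t) :
    ∫ τ in (0 : ℝ)..b, (√(4 * π * (t - τ)))⁻¹ = (√t - √(t - b)) / √π := by
  have hlt : ∀ τ ∈ Icc 0 b, 0 < t - τ := fun τ hτ => sub_pos.mpr (hτ.2.trans_lt hbt)
  have hderiv : ∀ τ ∈ Ioo 0 b,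
      HasDerivAt (fun σ => -√(t - σ) / √π) (√(4 * π * (t - τ)))⁻¹ τ := by
    intro τ hτ
    have hpos := hlt τ (Ioo_subset_Icc_self hτ)
    refine ((((hasDerivAt_id' τ).const_sub t).sqrt hpos.ne').neg.div_const _).congr_deriv ?_
    rw [sqrt_four_mul_pi_mul hpos.le]
    have hπ : 0 < √π := sqrt_pos.mpr pi_pos
    have hq : 0 < √(t - τ) := sqrt_pos.mpr hpos
    field_simp
  rw [integral_eq_sub_of_hasDerivAt_of_le hb (by fun_prop) hderiv, sub_zero]
  · ring
  · refine ContinuousOn.intervalIntegrable_of_Icc hb (ContinuousOn.inv₀ (by fun_prop) ?_)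
    intro τ hτ
    have := hlt τ hτ
    positivity

theorem abs_integral_heatKernel_mul_le {t b M : ℝ} {x ψ : ℝ → ℝ} (hb : 0 ≤ b) (hbt : b < t)
    (hψ : ∀ τ ∈ Icc 0 b, |ψ τ| ≤ M) :
    |∫ τ in (0 : ℝ)..b, heatKernel (x τ) (t - τ) * ψ τ| ≤ √(t / π) * M := by
  have hM : 0 ≤ M := (abs_nonneg _).trans (hψ 0 ⟨le_rfl, hb⟩)
  have hlt : ∀ τ ∈ Icc 0 b, 0 < t - τ := fun τ hτ => sub_pos.mpr (hτ.2.trans_lt hbt)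
  have hpt : ∀ τ ∈ Ioc 0 b,
      ‖heatKernel (x τ) (t - τ) * ψ τ‖ ≤ M * (√(4 * π * (t - τ)))⁻¹ := fun τ hτ => by
    rw [norm_mul, norm_of_nonneg (heatKernel_nonneg _ _), mul_comm M]
    exact mul_le_mul (heatKernel_le _ (hlt τ (Ioc_subset_Icc_self hτ)))
      (hψ τ (Ioc_subset_Icc_self hτ)) (abs_nonneg _) (by positivity)
  have hint : IntervalIntegrable (fun τ => M * (√(4 * π * (t - τ)))⁻¹) volume 0 b := by
    refine ContinuousOn.intervalIntegrable_of_Icc hb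
      (continuousOn_const.mul (ContinuousOn.inv₀ (by fun_prop) ?_))
    intro τ hτ
    have := hlt τ hτ
    positivity
  calc |∫ τ in (0 : ℝ)..b, heatKernel (x τ) (t - τ) * ψ τ|
      ≤ ∫ τ in (0 : ℝ)..b, M * (√(4 * π * (t - τ)))⁻¹ :=
        norm_integral_le_of_norm_le hb (.of_forall hpt) hint
    _ = M * ((√t - √(t - b)) / √π) := by
        rw [intervalIntegral.integral_const_mul, integral_inv_sqrt_four_pi_mul_sub hb hbt]
    _ ≤ M * (√t / √π) := by gcongr; linarith [sqrt_nonneg (t - b)]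
    _ = √(t / π) * M := by rw [sqrt_div' _ pi_pos.le, mul_comm]

theorem ContinuousOn.le_on_Icc_of_le_on_Ioo {f g : ℝ → ℝ} {a b : ℝ}
    (hf : ContinuousOn f (Icc a b)) (hab : a < b) (hg : ContinuousOn g (Icc a b))
    (h : ∀ x ∈ Ioo a b, f x ≤ g x) : ∀ x ∈ Icc a b, f x ≤ g x := by
  rw [← closure_Ioo hab.ne] at hf hg ⊢
  exact le_on_closure h hf hg

theorem bddAbove_image_Icc_of_eqOn_Ioo {f g : ℝ → ℝ} {a b : ℝ}
    (hg : ContinuousOn g (Icc a b)) (hfg : EqOn f g (Ioo a b)) : BddAbove (f '' Icc a b) := by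
  refine ((isCompact_Icc.image_of_continuousOn hg).bddAbove.union
    (toFinite {f a, f b}).bddAbove).mono ?_
  rintro _ ⟨τ, hτ, rfl⟩
  rcases eq_endpoints_or_mem_Ioo_of_mem_Icc hτ with rfl | rfl | hτ'
  · exact Or.inr (Or.inl rfl)
  · exact Or.inr (Or.inr rfl)
  · exact Or.inl ⟨τ, hτ, (hfg hτ').symm⟩

theorem le_sSup_image_Icc_of_eqOn_Ioo {f g : ℝ → ℝ} {a b : ℝ} (hab : a < b)
    (hg : ContinuousOn g (Icc a b)) (hfg : EqOn f g (Ioo a b)) :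
    ∀ x ∈ Icc a b, g x ≤ sSup (f '' Icc a b) :=
  hg.le_on_Icc_of_le_on_Ioo hab continuousOn_const fun _ hx =>
    hfg hx ▸ le_csSup (bddAbove_image_Icc_of_eqOn_Ioo hg hfg)
      (mem_image_of_mem f (Ioo_subset_Icc_self hx))

theorem ContDiffOn.hasDerivAt_derivWithin_Icc {f : ℝ → ℝ} {a b τ : ℝ}
    (hf : ContDiffOn ℝ 1 f (Icc a b)) (hτ : τ ∈ Ioo a b) :
    HasDerivAt f (derivWithin f (Icc a b) τ) τ :=
  (hf.differentiableOn one_ne_zero τ (Ioo_subset_Icc_self hτ)).hasDerivWithinAt.hasDerivAt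
    (Icc_mem_nhds hτ.1 hτ.2)

section
variable {t y a b M : ℝ} {γ φ γ' φ' : ℝ → ℝ}

theorem integral_dlKernel_mul_eq (hab : a ≤ b) (hbt : b < t)
    (hγ : ContinuousOn γ (Icc a b)) (hφ : ContinuousOn φ (Icc a b))
    (hγ' : ContinuousOn γ' (Icc a b)) (hφ' : ContinuousOn φ' (Icc a b))
    (hγd : ∀ τ ∈ Ioo a b, HasDerivAt γ (γ' τ) τ) (hφd : ∀ τ ∈ Ioo a b, HasDerivAt φ (φ' τ) τ) :
    ∫ τ in a..b, dlKernel (y - γ τ) (t - τ) * φ τ =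
      heatKernelPrimitive (y - γ b) (t - b) * φ b - heatKernelPrimitive (y - γ a) (t - a) * φ a
        + (∫ τ in a..b, heatKernel (y - γ τ) (t - τ) * (γ' τ * φ τ))
        - ∫ τ in a..b, heatKernelPrimitive (y - γ τ) (t - τ) * φ' τ := by
  have hpos : ∀ τ ∈ Icc a b, 0 < t - τ := fun τ hτ => sub_pos.mpr (hτ.2.trans_lt hbt)
  have hx : ContinuousOn (fun τ => y - γ τ) (Icc a b) := continuousOn_const.sub hγ
  have hs : ContinuousOn (fun τ => t - τ) (Icc a b) := by fun_prop
  have hF := hx.heatKernelPrimitive hs hpos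
  have hH : IntervalIntegrable (fun τ => dlKernel (y - γ τ) (t - τ) * φ τ) volume a b :=
    ((hx.dlKernel hs hpos).mul hφ).intervalIntegrable_of_Icc hab
  have hK : IntervalIntegrable (fun τ => heatKernel (y - γ τ) (t - τ) * (γ' τ * φ τ)) volume a b :=
    ((hx.heatKernel hs hpos).mul (hγ'.mul hφ)).intervalIntegrable_of_Icc hab
  have hFφ' : IntervalIntegrable (fun τ => heatKernelPrimitive (y - γ τ) (t - τ) * φ' τ)
      volume a b :=
    (hF.mul hφ').intervalIntegrable_of_Icc hab
  have hderiv : ∀ τ ∈ Ioo a b,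
      HasDerivAt (fun σ => heatKernelPrimitive (y - γ σ) (t - σ) * φ σ)
        (dlKernel (y - γ τ) (t - τ) * φ τ - heatKernel (y - γ τ) (t - τ) * (γ' τ * φ τ)
          + heatKernelPrimitive (y - γ τ) (t - τ) * φ' τ) τ := fun τ hτ =>
    ((((hγd τ hτ).const_sub y).heatKernelPrimitive ((hasDerivAt_id' τ).const_sub t)
      (hpos τ (Ioo_subset_Icc_self hτ))).mul (hφd τ hτ)).congr_deriv (by ring)
  have hFTC := integral_eq_sub_of_hasDerivAt_of_le hab (hF.mul hφ) hderiv ((hH.sub hK).add hFφ')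
  rw [intervalIntegral.integral_add (hH.sub hK) hFφ', intervalIntegral.integral_sub hH hK,
    Pi.mul_apply, Pi.mul_apply] at hFTC
  linarith

theorem abs_integral_dlKernel_mul_le_of_lt (hb : 0 ≤ b) (hbt : b < t)
    (hγ : ContinuousOn γ (Icc 0 b)) (hφ : ContinuousOn φ (Icc 0 b))
    (hγ' : ContinuousOn γ' (Icc 0 b)) (hφ' : ContinuousOn φ' (Icc 0 b))
    (hγd : ∀ τ ∈ Ioo 0 b, HasDerivAt γ (γ' τ) τ) (hφd : ∀ τ ∈ Ioo 0 b, HasDerivAt φ (φ' τ) τ)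
    (hM : ∀ τ ∈ Icc 0 b, |γ' τ * φ τ| ≤ M) :
    |∫ τ in (0 : ℝ)..b, dlKernel (y - γ τ) (t - τ) * φ τ| ≤
      (|φ 0| + |φ b|) / 2 + 1 / 2 * (∫ τ in (0 : ℝ)..b, |φ' τ|) + √(t / π) * M := by
  have hboundary := abs_sub (heatKernelPrimitive (y - γ b) (t - b) * φ b)
    (heatKernelPrimitive (y - γ 0) (t - 0) * φ 0)
  have hb0 := abs_heatKernelPrimitive_mul_le (y - γ b) (t - b) (φ b)
  have h00 := abs_heatKernelPrimitive_mul_le (y - γ 0) (t - 0) (φ 0)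
  have hsingle := abs_integral_heatKernel_mul_le (x := fun τ => y - γ τ) hb hbt hM
  have hvariation : |∫ τ in (0 : ℝ)..b, heatKernelPrimitive (y - γ τ) (t - τ) * φ' τ|
      ≤ 1 / 2 * ∫ τ in (0 : ℝ)..b, |φ' τ| := by
    have hint : IntervalIntegrable (fun τ => 1 / 2 * |φ' τ|) volume 0 b :=
      (continuousOn_const.mul hφ'.abs).intervalIntegrable_of_Icc hb
    rw [← Real.norm_eq_abs, ← intervalIntegral.integral_const_mul]
    refine norm_integral_le_of_norm_le hb (.of_forall fun τ _ => ?_) hint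
    rw [Real.norm_eq_abs, one_div_mul_eq_div]
    exact abs_heatKernelPrimitive_mul_le _ _ _
  rw [integral_dlKernel_mul_eq hb hbt hγ hφ hγ' hφ' hγd hφd]
  refine (abs_sub _ _).trans ?_
  linarith [abs_add_le (heatKernelPrimitive (y - γ b) (t - b) * φ b
    - heatKernelPrimitive (y - γ 0) (t - 0) * φ 0)
    (∫ τ in (0 : ℝ)..b, heatKernel (y - γ τ) (t - τ) * (γ' τ * φ τ))]

theorem intervalIntegrable_dlKernel_mul (ht : 0 ≤ t)
    (hγ : ContinuousOn γ (Icc 0 t)) (hφ : ContinuousOn φ (Icc 0 t))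
    (hy : ∀ τ ∈ Icc 0 t, γ τ < y) :
    IntervalIntegrable (fun τ => dlKernel (y - γ τ) (t - τ) * φ τ) volume 0 t := by
  obtain ⟨τ₀, hτ₀, hmin⟩ :=
    isCompact_Icc.exists_isMinOn (nonempty_Icc.mpr ht) (continuousOn_const.sub hγ)
  obtain ⟨C, hC⟩ := isCompact_Icc.exists_bound_of_continuousOn hφ
  have hc : 0 < y - γ τ₀ := sub_pos.mpr (hy τ₀ hτ₀)
  have hbound : ∀ τ ∈ Ioo 0 t,
      ‖dlKernel (y - γ τ) (t - τ) * φ τ‖ ≤ 8 * √t / (√π * (y - γ τ₀) ^ 3) * C := by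
    intro τ hτ
    have hx : y - γ τ₀ ≤ y - γ τ := hmin (Ioo_subset_Icc_self hτ)
    have hs : 0 < t - τ := sub_pos.mpr hτ.2
    rw [norm_mul, Real.norm_eq_abs, abs_of_nonneg (dlKernel_nonneg (hc.trans_le hx).le hs.le)]
    refine mul_le_mul ((dlKernel_le (hc.trans_le hx) hs).trans ?_) (hC τ (Ioo_subset_Icc_self hτ))
      (norm_nonneg _) (by positivity)
    gcongr
    linarith [hτ.1]
  have hcont : ContinuousOn (fun τ => dlKernel (y - γ τ) (t - τ) * φ τ) (Ioo 0 t) :=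
    (((continuousOn_const.sub hγ).mono Ioo_subset_Icc_self).dlKernel (by fun_prop)
      fun τ hτ => sub_pos.mpr hτ.2).mul (hφ.mono Ioo_subset_Icc_self)
  rw [intervalIntegrable_iff_integrableOn_Ioo_of_le ht]
  exact Integrable.of_bound (hcont.aestronglyMeasurable measurableSet_Ioo) _
    ((ae_restrict_iff' measurableSet_Ioo).mpr (.of_forall hbound))

theorem abs_integral_dlKernel_mul_le (ht : 0 < t)
    (hγ : ContinuousOn γ (Icc 0 t)) (hφ : ContinuousOn φ (Icc 0 t))
    (hγ' : ContinuousOn γ' (Icc 0 t)) (hφ' : ContinuousOn φ' (Icc 0 t))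
    (hγd : ∀ τ ∈ Ioo 0 t, HasDerivAt γ (γ' τ) τ) (hφd : ∀ τ ∈ Ioo 0 t, HasDerivAt φ (φ' τ) τ)
    (hy : ∀ τ ∈ Icc 0 t, γ τ < y) (hM : ∀ τ ∈ Icc 0 t, |γ' τ * φ τ| ≤ M) :
    |∫ τ in (0 : ℝ)..t, dlKernel (y - γ τ) (t - τ) * φ τ| ≤
      (|φ 0| + |φ t|) / 2 + 1 / 2 * (∫ τ in (0 : ℝ)..t, |φ' τ|) + √(t / π) * M := by
  have hprim : ContinuousOn (fun b => ∫ τ in (0 : ℝ)..b, dlKernel (y - γ τ) (t - τ) * φ τ)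
      (Icc 0 t) := by
    simpa only [uIcc_of_le ht.le] using continuousOn_primitive_interval'
      (intervalIntegrable_dlKernel_mul ht.le hγ hφ hy) left_mem_uIcc
  have hvar : ContinuousOn (fun b => ∫ τ in (0 : ℝ)..b, |φ' τ|) (Icc 0 t) := by
    simpa only [uIcc_of_le ht.le] using continuousOn_primitive_interval'
      (hφ'.abs.intervalIntegrable_of_Icc ht.le) left_mem_uIcc
  refine hprim.abs.le_on_Icc_of_le_on_Ioo (g := fun b => (|φ 0| + |φ b|) / 2
      + 1 / 2 * (∫ τ in (0 : ℝ)..b, |φ' τ|) + √(t / π) * M) ht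
    ((((continuousOn_const.add hφ.abs).div_const 2).add (continuousOn_const.mul hvar)).add
      continuousOn_const) (fun b hb => ?_) t (right_mem_Icc.mpr ht.le)
  have hsub : Icc 0 b ⊆ Icc 0 t := Icc_subset_Icc_right hb.2.le
  have hsub' : Ioo 0 b ⊆ Ioo 0 t := Ioo_subset_Ioo_right hb.2.le
  exact abs_integral_dlKernel_mul_le_of_lt hb.1.le hb.2 (hγ.mono hsub) (hφ.mono hsub)
    (hγ'.mono hsub) (hφ'.mono hsub) (fun τ hτ => hγd τ (hsub' hτ)) (fun τ hτ => hφd τ (hsub' hτ))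
    fun τ hτ => hM τ (hsub hτ)

end

/-- Uniform bound for the double-layer heat potential
`I[γ,φ](y,t) = ∫_0^t H(y-γ(τ), t-τ) φ(τ) dτ` with `γ, φ ∈ C¹([0,t])`:
`|I| ≤ (|φ(0)|+|φ(t)|)/2 + (1/2)∫_0^t |φ'| + √(t/π) max |γ'φ|`. -/
theorem double_layer_potential_uniform_bound
    (t : ℝ) (ht : 0 < t) (γ φ : ℝ → ℝ)
    (hγ : ContDiffOn ℝ 1 γ (Set.Icc 0 t)) (hφ : ContDiffOn ℝ 1 φ (Set.Icc 0 t))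
    (y : ℝ) (hy : ∀ τ ∈ Set.Icc 0 t, γ τ < y) :
    |∫ τ in (0:ℝ)..t, dlKernel (y - γ τ) (t - τ) * φ τ| ≤
      (|φ 0| + |φ t|) / 2 + (1/2) * (∫ τ in (0:ℝ)..t, |deriv φ τ|)
        + Real.sqrt (t / Real.pi) *
            sSup ((fun τ => |deriv γ τ * φ τ|) '' Set.Icc 0 t) := by
  have hU : UniqueDiffOn ℝ (Icc 0 t) := uniqueDiffOn_Icc ht
  have hγ' := hγ.continuousOn_derivWithin hU le_rfl
  have hφ' := hφ.continuousOn_derivWithin hU le_rfl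
  have hγd (τ) (hτ : τ ∈ Ioo 0 t) := hγ.hasDerivAt_derivWithin_Icc hτ
  have hφd (τ) (hτ : τ ∈ Ioo 0 t) := hφ.hasDerivAt_derivWithin_Icc hτ
  have hM := le_sSup_image_Icc_of_eqOn_Ioo (f := fun τ => |deriv γ τ * φ τ|) ht
    (hγ'.mul hφ.continuousOn).abs fun τ hτ => by simp only [(hγd τ hτ).deriv, Pi.mul_apply]
  have hvar : ∫ τ in (0 : ℝ)..t, |deriv φ τ| = ∫ τ in (0 : ℝ)..t, |derivWithin φ (Icc 0 t) τ| :=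
    integral_congr_Ioo_of_le ht.le fun τ hτ => by simp only [(hφd τ hτ).deriv]
  rw [hvar]
  exact abs_integral_dlKernel_mul_le ht hγ.continuousOn hφ.continuousOn hγ' hφ' hγd hφd hy hM
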